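/- arXiv:1705.04632 — 4 statements merged into one kernel-verified Lean document; each statement's English description precedes it below -/
import Mathlib

section
/- In a finite coloured linear order that is (n+1)-optimal (i.e., not (n+1)-equivalent to any strictly shorter coloured linear order), no two consecutive points have the same n-character. -/
/-!
If consecutive points `a < b` have the same `n`-character, deleting `b` leaves an
`(n+1)`-equivalent order with one point fewer, contradicting optimality. In the `(n+1)`-move
game Duplicator answers `b` by `a` and every other point by itself. That the sides of matched
points are `n`-equivalent follows from the composition theorem for ordered sums: after cutting
both sides at a suitable point, the pieces either coincide, or are `A^{<a}, A^{<b}` or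
`A^{>a}, A^{>b}` (`n`-equivalent by hypothesis), or are the single points `a` and `b`, of equal
colour.
-/

/-- A coloured linear order: a linear order together with a colouring map into `C`. -/
structure CLO (C : Type) where
  carrier : Type
  [ord : LinearOrder carrier]
  colour : carrier → C

attribute [instance] CLO.ord

namespace CLO

variable {C : Type}

/-- Induced coloured suborder on a subset. -/
def sub (A : CLO C) (s : Set A.carrier) : CLO C where
  carrier := ↥s
  colour := fun x => A.colour x.val

/-- The coloured suborder `A^{<a}`. -/
def left (A : CLO C) (a : A.carrier) : CLO C := A.sub {x | x < a}

/-- The coloured suborder `A^{>a}`. -/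
def right (A : CLO C) (a : A.carrier) : CLO C := A.sub {x | a < x}

/-- `n`-move Ehrenfeucht–Fraïssé equivalence of coloured linear orders, via the standard
back-and-forth characterization for linear orders. -/
def EFEquiv : ℕ → CLO C → CLO C → Prop
  | 0, _, _ => True
  | n + 1, A, B =>
      (∀ a : A.carrier, ∃ b : B.carrier, A.colour a = B.colour b ∧
        EFEquiv n (A.left a) (B.left b) ∧ EFEquiv n (A.right a) (B.right b)) ∧
      (∀ b : B.carrier, ∃ a : A.carrier, A.colour a = B.colour b ∧
        EFEquiv n (A.left a) (B.left b) ∧ EFEquiv n (A.right a) (B.right b))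

/-- `a` and `b` realize the same `n`-character (including the colour) in `A`. -/
def SameChar (n : ℕ) (A : CLO C) (a b : A.carrier) : Prop :=
  A.colour a = A.colour b ∧ EFEquiv n (A.left a) (A.left b) ∧
    EFEquiv n (A.right a) (A.right b)

/-- The finite coloured linear order (string) given by a list. -/
def ofList (l : List C) : CLO C where
  carrier := Fin l.length
  colour := l.get

/-- `A` is `≡ₙ`-optimal: no strictly shorter coloured linear order is `n`-equivalent to it. -/
def Optimal (n : ℕ) (A : CLO C) : Prop :=
  ∀ B : CLO C, Finite B.carrier → EFEquiv n A B → Nat.card A.carrier ≤ Nat.card B.carrier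

end CLO

open Set

namespace IsLowerSet

section Preorder

variable {α : Type*} [Preorder α] {L : Set α} {x : α}

theorem inter_inter_Iio_of_mem (hL : IsLowerSet L) (hx : x ∈ L) (s : Set α) :
    s ∩ L ∩ Iio x = s ∩ Iio x := by
  ext z
  exact ⟨fun ⟨⟨hs, _⟩, hz⟩ => ⟨hs, hz⟩, fun ⟨hs, hz⟩ => ⟨⟨hs, hL hz.le hx⟩, hz⟩⟩

theorem sdiff_inter_Ioi_of_notMem (hL : IsLowerSet L) (hx : x ∉ L) (s : Set α) :
    s \ L ∩ Ioi x = s ∩ Ioi x := by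
  ext z
  exact ⟨fun ⟨⟨hs, _⟩, hz⟩ => ⟨hs, hz⟩, fun ⟨hs, hz⟩ => ⟨⟨hs, fun h => hx (hL hz.le h)⟩, hz⟩⟩

end Preorder

variable {α : Type*} [LinearOrder α] {L : Set α} {x : α}

theorem inter_Ioi_sdiff_of_mem (hL : IsLowerSet L) (hx : x ∈ L) (s : Set α) :
    (s ∩ Ioi x) \ L = s \ L := by
  ext z
  exact ⟨fun ⟨⟨hs, _⟩, hz⟩ => ⟨hs, hz⟩,
    fun ⟨hs, hz⟩ => ⟨⟨hs, lt_of_not_ge fun h => hz (hL h hx)⟩, hz⟩⟩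

theorem inter_Iio_inter_of_notMem (hL : IsLowerSet L) (hx : x ∉ L) (s : Set α) :
    s ∩ Iio x ∩ L = s ∩ L := by
  ext z
  exact ⟨fun ⟨⟨hs, _⟩, hz⟩ => ⟨hs, hz⟩,
    fun ⟨hs, hz⟩ => ⟨⟨hs, lt_of_not_ge fun h => hx (hL h hz)⟩, hz⟩⟩

end IsLowerSet

namespace CLO

variable {C : Type}

local notation:50 A:51 " ≡[" n "] " B:51 => EFEquiv n A B

theorem EFEquiv.of_succ : ∀ {n : ℕ} {A B : CLO C}, A ≡[n + 1] B → A ≡[n] B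
  | 0, _, _, _ => trivial
  | _ + 1, _, _, ⟨forth, back⟩ =>
    ⟨fun a => let ⟨b, hc, hl, hr⟩ := forth a; ⟨b, hc, EFEquiv.of_succ hl, EFEquiv.of_succ hr⟩,
     fun b => let ⟨a, hc, hl, hr⟩ := back b; ⟨a, hc, EFEquiv.of_succ hl, EFEquiv.of_succ hr⟩⟩

theorem EFEquiv.symm : ∀ {n : ℕ} {A B : CLO C}, A ≡[n] B → B ≡[n] A
  | 0, _, _, _ => trivial
  | _ + 1, _, _, ⟨forth, back⟩ =>
    ⟨fun b => let ⟨a, hc, hl, hr⟩ := back b; ⟨a, hc.symm, EFEquiv.symm hl, EFEquiv.symm hr⟩,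
     fun a => let ⟨b, hc, hl, hr⟩ := forth a; ⟨b, hc.symm, EFEquiv.symm hl, EFEquiv.symm hr⟩⟩

theorem EFEquiv.trans : ∀ {n : ℕ} {A B D : CLO C}, A ≡[n] B → B ≡[n] D → A ≡[n] D
  | 0, _, _, _, _, _ => trivial
  | _ + 1, _, _, _, ⟨forth, back⟩, ⟨forth', back'⟩ =>
    ⟨fun a =>
      let ⟨b, hc, hl, hr⟩ := forth a
      let ⟨d, hc', hl', hr'⟩ := forth' b
      ⟨d, hc.trans hc', EFEquiv.trans hl hl', EFEquiv.trans hr hr'⟩,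
     fun d =>
      let ⟨b, hc', hl', hr'⟩ := back' d
      let ⟨a, hc, hl, hr⟩ := back b
      ⟨a, hc.trans hc', EFEquiv.trans hl hl', EFEquiv.trans hr hr'⟩⟩

instance (n : ℕ) : Trans (EFEquiv (C := C) n) (EFEquiv n) (EFEquiv n) := ⟨EFEquiv.trans⟩

theorem efEquiv_of_strictMono {A B : CLO C} (f : A.carrier → B.carrier) (hf : StrictMono f)
    (hsurj : f.Surjective) (hcol : ∀ x, A.colour x = B.colour (f x)) :
    ∀ n, A ≡[n] B
  | 0 => trivial
  | n + 1 => by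
    have restrict : ∀ (s : Set A.carrier) (t : Set B.carrier), (∀ z, z ∈ s ↔ f z ∈ t) →
        A.sub s ≡[n] B.sub t := fun s t hst =>
      efEquiv_of_strictMono (A := A.sub s) (B := B.sub t)
        (fun z => ⟨f z.1, (hst z.1).mp z.2⟩) (fun _ _ h => hf h)
        (fun ⟨w, hw⟩ => let ⟨v, hv⟩ := hsurj w; ⟨⟨v, (hst v).mpr (hv ▸ hw)⟩, Subtype.ext hv⟩)
        (fun z => hcol z.1) n
    have matched : ∀ x, A.left x ≡[n] B.left (f x) ∧ A.right x ≡[n] B.right (f x) := fun x =>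
      ⟨restrict _ _ fun _ => hf.lt_iff_lt.symm, restrict _ _ fun _ => hf.lt_iff_lt.symm⟩
    exact ⟨fun x => ⟨f x, hcol x, matched x⟩,
      fun y => let ⟨x, hx⟩ := hsurj y; ⟨x, hx ▸ hcol x, hx ▸ matched x⟩⟩

theorem EFEquiv.refl (n : ℕ) (A : CLO C) : A ≡[n] A :=
  efEquiv_of_strictMono id strictMono_id Function.surjective_id (fun _ => rfl) n

theorem efEquiv_sub_sub (n : ℕ) (A : CLO C) {s : Set A.carrier} {t : Set (A.sub s).carrier}
    {u : Set A.carrier} (hu : ∀ y, y ∈ u ↔ ∃ hy : y ∈ s, ⟨y, hy⟩ ∈ t) :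
    (A.sub s).sub t ≡[n] A.sub u :=
  efEquiv_of_strictMono (A := (A.sub s).sub t) (B := A.sub u)
    (fun z => ⟨z.1.1, (hu _).mpr ⟨z.1.2, z.2⟩⟩) (fun _ _ h => h)
    (fun ⟨y, hy⟩ => let ⟨hys, hyt⟩ := (hu y).mp hy; ⟨⟨⟨y, hys⟩, hyt⟩, rfl⟩) (fun _ => rfl) n

theorem efEquiv_sub_left (n : ℕ) (A : CLO C) (s : Set A.carrier) (x : (A.sub s).carrier) :
    (A.sub s).left x ≡[n] A.sub (s ∩ Iio x.1) :=
  efEquiv_sub_sub n A fun _ => ⟨fun ⟨hs, hlt⟩ => ⟨hs, hlt⟩, fun ⟨hs, hlt⟩ => ⟨hs, hlt⟩⟩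

theorem efEquiv_sub_right (n : ℕ) (A : CLO C) (s : Set A.carrier) (x : (A.sub s).carrier) :
    (A.sub s).right x ≡[n] A.sub (s ∩ Ioi x.1) :=
  efEquiv_sub_sub n A fun _ => ⟨fun ⟨hs, hlt⟩ => ⟨hs, hlt⟩, fun ⟨hs, hlt⟩ => ⟨hs, hlt⟩⟩

theorem efEquiv_sub_singleton (n : ℕ) {A B : CLO C} {a : A.carrier} {b : B.carrier}
    (h : A.colour a = B.colour b) : A.sub {a} ≡[n] B.sub {b} :=
  efEquiv_of_strictMono (A := A.sub {a}) (B := B.sub {b}) (fun _ => ⟨b, rfl⟩)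
    (@Subsingleton.strictMono _ _ _ _ (Set.subsingleton_singleton.coe_sort) _)
    (fun y : (B.sub {b}).carrier => ⟨⟨a, rfl⟩, Subtype.ext y.2.symm⟩)
    (fun x => show A.colour x.1 = B.colour b by rw [Set.mem_singleton_iff.mp x.2]; exact h) n

section Split

variable {A B : CLO C} {L : Set A.carrier} {M : Set B.carrier}

theorem exists_efEquiv_of_isLowerSet_of_mem (hL : IsLowerSet L) (hM : IsLowerSet M) {n : ℕ}
    (ih : ∀ {s t}, A.sub (s ∩ L) ≡[n] B.sub (t ∩ M) → A.sub (s \ L) ≡[n] B.sub (t \ M) →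
      A.sub s ≡[n] B.sub t)
    {s : Set A.carrier} {t : Set B.carrier}
    (hlow : A.sub (s ∩ L) ≡[n + 1] B.sub (t ∩ M)) (hupp : A.sub (s \ L) ≡[n + 1] B.sub (t \ M))
    (x : (A.sub s).carrier) (hx : x.1 ∈ L) :
    ∃ y : (B.sub t).carrier, (A.sub s).colour x = (B.sub t).colour y ∧
      (A.sub s).left x ≡[n] (B.sub t).left y ∧ (A.sub s).right x ≡[n] (B.sub t).right y := by
  obtain ⟨y, hcol, hleft, hright⟩ := hlow.1 ⟨x.1, x.2, hx⟩
  have hy : y.1 ∈ M := y.2.2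
  refine ⟨⟨y.1, y.2.1⟩, hcol, ?_, ?_⟩
  · calc (A.sub s).left x ≡[n] A.sub (s ∩ Iio x.1) := efEquiv_sub_left n A s x
      _ = A.sub (s ∩ L ∩ Iio x.1) := by rw [hL.inter_inter_Iio_of_mem hx]
      _ ≡[n] _ := (efEquiv_sub_left n A (s ∩ L) ⟨x.1, x.2, hx⟩).symm
      _ ≡[n] _ := hleft
      _ ≡[n] B.sub (t ∩ M ∩ Iio y.1) := efEquiv_sub_left n B _ y
      _ = B.sub (t ∩ Iio y.1) := by rw [hM.inter_inter_Iio_of_mem hy]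
      _ ≡[n] _ := (efEquiv_sub_left n B t ⟨y.1, y.2.1⟩).symm
  · calc (A.sub s).right x ≡[n] A.sub (s ∩ Ioi x.1) := efEquiv_sub_right n A s x
      _ ≡[n] B.sub (t ∩ Ioi y.1) := ih ?_ ?_
      _ ≡[n] _ := (efEquiv_sub_right n B t ⟨y.1, y.2.1⟩).symm
    · calc A.sub (s ∩ Ioi x.1 ∩ L) = A.sub (s ∩ L ∩ Ioi x.1) := by rw [inter_right_comm]
        _ ≡[n] _ := (efEquiv_sub_right n A (s ∩ L) ⟨x.1, x.2, hx⟩).symm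
        _ ≡[n] _ := hright
        _ ≡[n] B.sub (t ∩ M ∩ Ioi y.1) := efEquiv_sub_right n B _ y
        _ = B.sub (t ∩ Ioi y.1 ∩ M) := by rw [inter_right_comm]
    · rw [hL.inter_Ioi_sdiff_of_mem hx, hM.inter_Ioi_sdiff_of_mem hy]
      exact hupp.of_succ

theorem exists_efEquiv_of_isLowerSet_of_notMem (hL : IsLowerSet L) (hM : IsLowerSet M) {n : ℕ}
    (ih : ∀ {s t}, A.sub (s ∩ L) ≡[n] B.sub (t ∩ M) → A.sub (s \ L) ≡[n] B.sub (t \ M) →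
      A.sub s ≡[n] B.sub t)
    {s : Set A.carrier} {t : Set B.carrier}
    (hlow : A.sub (s ∩ L) ≡[n + 1] B.sub (t ∩ M)) (hupp : A.sub (s \ L) ≡[n + 1] B.sub (t \ M))
    (x : (A.sub s).carrier) (hx : x.1 ∉ L) :
    ∃ y : (B.sub t).carrier, (A.sub s).colour x = (B.sub t).colour y ∧
      (A.sub s).left x ≡[n] (B.sub t).left y ∧ (A.sub s).right x ≡[n] (B.sub t).right y := by
  obtain ⟨y, hcol, hleft, hright⟩ := hupp.1 ⟨x.1, x.2, hx⟩
  have hy : y.1 ∉ M := y.2.2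
  refine ⟨⟨y.1, y.2.1⟩, hcol, ?_, ?_⟩
  · calc (A.sub s).left x ≡[n] A.sub (s ∩ Iio x.1) := efEquiv_sub_left n A s x
      _ ≡[n] B.sub (t ∩ Iio y.1) := ih ?_ ?_
      _ ≡[n] _ := (efEquiv_sub_left n B t ⟨y.1, y.2.1⟩).symm
    · rw [hL.inter_Iio_inter_of_notMem hx, hM.inter_Iio_inter_of_notMem hy]
      exact hlow.of_succ
    · calc A.sub ((s ∩ Iio x.1) \ L) = A.sub (s \ L ∩ Iio x.1) := by
            rw [sdiff_inter_right_comm]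
        _ ≡[n] _ := (efEquiv_sub_left n A (s \ L) ⟨x.1, x.2, hx⟩).symm
        _ ≡[n] _ := hleft
        _ ≡[n] B.sub (t \ M ∩ Iio y.1) := efEquiv_sub_left n B _ y
        _ = B.sub ((t ∩ Iio y.1) \ M) := by rw [sdiff_inter_right_comm]
  · calc (A.sub s).right x ≡[n] A.sub (s ∩ Ioi x.1) := efEquiv_sub_right n A s x
      _ = A.sub (s \ L ∩ Ioi x.1) := by rw [hL.sdiff_inter_Ioi_of_notMem hx]
      _ ≡[n] _ := (efEquiv_sub_right n A (s \ L) ⟨x.1, x.2, hx⟩).symm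
      _ ≡[n] _ := hright
      _ ≡[n] B.sub (t \ M ∩ Ioi y.1) := efEquiv_sub_right n B _ y
      _ = B.sub (t ∩ Ioi y.1) := by rw [hM.sdiff_inter_Ioi_of_notMem hy]
      _ ≡[n] _ := (efEquiv_sub_right n B t ⟨y.1, y.2.1⟩).symm

theorem exists_efEquiv_of_isLowerSet (hL : IsLowerSet L) (hM : IsLowerSet M) {n : ℕ}
    (ih : ∀ {s t}, A.sub (s ∩ L) ≡[n] B.sub (t ∩ M) → A.sub (s \ L) ≡[n] B.sub (t \ M) →
      A.sub s ≡[n] B.sub t)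
    {s : Set A.carrier} {t : Set B.carrier}
    (hlow : A.sub (s ∩ L) ≡[n + 1] B.sub (t ∩ M)) (hupp : A.sub (s \ L) ≡[n + 1] B.sub (t \ M))
    (x : (A.sub s).carrier) :
    ∃ y : (B.sub t).carrier, (A.sub s).colour x = (B.sub t).colour y ∧
      (A.sub s).left x ≡[n] (B.sub t).left y ∧ (A.sub s).right x ≡[n] (B.sub t).right y := by
  by_cases hx : x.1 ∈ L
  exacts [exists_efEquiv_of_isLowerSet_of_mem hL hM ih hlow hupp x hx,
    exists_efEquiv_of_isLowerSet_of_notMem hL hM ih hlow hupp x hx]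

/-- The composition theorem for ordered sums, with both orders cut along a lower set. -/
theorem efEquiv_sub_of_isLowerSet (hL : IsLowerSet L) (hM : IsLowerSet M) (n : ℕ)
    {s : Set A.carrier} {t : Set B.carrier}
    (hlow : A.sub (s ∩ L) ≡[n] B.sub (t ∩ M)) (hupp : A.sub (s \ L) ≡[n] B.sub (t \ M)) :
    A.sub s ≡[n] B.sub t := by
  induction n generalizing s t with
  | zero => trivial
  | succ n ih =>
    refine ⟨exists_efEquiv_of_isLowerSet hL hM ih hlow hupp, fun y => ?_⟩
    obtain ⟨x, hcol, hleft, hright⟩ := exists_efEquiv_of_isLowerSet hM hL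
      (fun hlow hupp => (ih hlow.symm hupp.symm).symm) hlow.symm hupp.symm y
    exact ⟨x, hcol.symm, hleft.symm, hright.symm⟩

end Split

theorem efEquiv_sub_Iic {A B : CLO C} {n : ℕ} {a : A.carrier} {b : B.carrier}
    (hcol : A.colour a = B.colour b) (h : A.left a ≡[n] B.left b) :
    A.sub (Iic a) ≡[n] B.sub (Iic b) := by
  refine efEquiv_sub_of_isLowerSet (isLowerSet_Iio a) (isLowerSet_Iio b) n ?_ ?_
  · rw [inter_eq_right.mpr Iio_subset_Iic_self, inter_eq_right.mpr Iio_subset_Iic_self]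
    exact h
  · rw [Iic_sdiff_Iio_same, Iic_sdiff_Iio_same]
    exact efEquiv_sub_singleton n hcol

section Consecutive

variable {A : CLO C} {n : ℕ} {a b : A.carrier}

theorem efEquiv_left_sub_compl_singleton (hab : a ⋖ b) (h : SameChar n A a b) {x : A.carrier}
    (hx : x ≠ b) : A.left x ≡[n] A.sub ({b}ᶜ ∩ Iio x) := by
  change A.sub (Iio x) ≡[n] _
  have hcov : ∀ z, z < b ↔ z ≤ a := fun _ => hab.lt_iff_le_left
  rcases hx.lt_or_gt with hxb | hbx
  · have hIio : {b}ᶜ ∩ Iio x = Iio x := by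
      ext z; simp only [mem_inter_iff, mem_compl_iff, mem_singleton_iff, mem_Iio]; grind
    rw [hIio]
    exact .refl n _
  -- Cut after `b` on the left and after `a` on the right: the lower pieces are `A^{≤b}` and
  -- `A^{≤a}`, the upper pieces are both the interval `(b, x)`.
  · refine efEquiv_sub_of_isLowerSet (isLowerSet_Iic b) (isLowerSet_Iic a) n ?_ ?_
    · have hl : Iio x ∩ Iic b = Iic b := by
        ext z; simp only [mem_inter_iff, mem_Iio, mem_Iic]; grind
      have hl' : {b}ᶜ ∩ Iio x ∩ Iic a = Iic a := by
        ext z; simp only [mem_inter_iff, mem_compl_iff, mem_singleton_iff, mem_Iio, mem_Iic]; grind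
      rw [hl, hl']
      exact efEquiv_sub_Iic h.1.symm h.2.1.symm
    · have hu : Iio x \ Iic b = ({b}ᶜ ∩ Iio x) \ Iic a := by
        ext z
        simp only [mem_inter_iff, mem_sdiff, mem_compl_iff, mem_singleton_iff, mem_Iio, mem_Iic]
        grind
      rw [hu]
      exact .refl n _

theorem efEquiv_right_sub_compl_singleton (hab : a ⋖ b) (h : SameChar n A a b) {x : A.carrier}
    (hx : x ≠ b) : A.right x ≡[n] A.sub ({b}ᶜ ∩ Ioi x) := by
  change A.sub (Ioi x) ≡[n] _
  have hcov : ∀ z, z < b ↔ z ≤ a := fun _ => hab.lt_iff_le_left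
  rcases hx.lt_or_gt with hxb | hbx
  -- Cut both sides after `a`: the lower pieces are both `(x, a]`, the upper pieces are
  -- `A^{>a}` and `A^{>b}`.
  · refine efEquiv_sub_of_isLowerSet (isLowerSet_Iic a) (isLowerSet_Iic a) n ?_ ?_
    · have hl : Ioi x ∩ Iic a = {b}ᶜ ∩ Ioi x ∩ Iic a := by
        ext z; simp only [mem_inter_iff, mem_compl_iff, mem_singleton_iff, mem_Ioi, mem_Iic]; grind
      rw [hl]
      exact .refl n _
    · have hu : Ioi x \ Iic a = Ioi a := by
        ext z; simp only [mem_sdiff, mem_Ioi, mem_Iic]; grind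
      have hu' : ({b}ᶜ ∩ Ioi x) \ Iic a = Ioi b := by
        ext z
        simp only [mem_inter_iff, mem_sdiff, mem_compl_iff, mem_singleton_iff, mem_Ioi, mem_Iic]
        grind
      rw [hu, hu']
      exact h.2.2
  · have hIoi : {b}ᶜ ∩ Ioi x = Ioi x := by
      ext z; simp only [mem_inter_iff, mem_compl_iff, mem_singleton_iff, mem_Ioi]; grind
    rw [hIoi]
    exact .refl n _

theorem efEquiv_sub_compl_singleton (hab : a ⋖ b) (h : SameChar n A a b) :
    A ≡[n + 1] A.sub {b}ᶜ := by
  have matched : ∀ x (hx : x ≠ b), A.left x ≡[n] (A.sub {b}ᶜ).left ⟨x, hx⟩ ∧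
      A.right x ≡[n] (A.sub {b}ᶜ).right ⟨x, hx⟩ := fun x hx =>
    ⟨(efEquiv_left_sub_compl_singleton hab h hx).trans (efEquiv_sub_left n A _ ⟨x, hx⟩).symm,
      (efEquiv_right_sub_compl_singleton hab h hx).trans (efEquiv_sub_right n A _ ⟨x, hx⟩).symm⟩
  refine ⟨fun x => ?_, fun y => ⟨y.1, rfl, matched y.1 y.2⟩⟩
  by_cases hx : x = b
  · subst hx
    have ha := matched a hab.lt.ne
    exact ⟨⟨a, hab.lt.ne⟩, h.1.symm, h.2.1.symm.trans ha.1, h.2.2.symm.trans ha.2⟩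
  · exact ⟨⟨x, hx⟩, rfl, matched x hx⟩

end Consecutive

end CLO

/-- in an `(n+1)`-optimal finite coloured linear order, no two consecutive points
realize the same `n`-character. -/
theorem stmt2 {C : Type} (A : CLO C) [Finite A.carrier] (n : ℕ)
    (hopt : CLO.Optimal (n + 1) A) (a b : A.carrier) (hab : a < b)
    (hcons : ¬∃ x : A.carrier, a < x ∧ x < b) :
    ¬ CLO.SameChar n A a b := by
  intro hchar
  have hcov : a ⋖ b := ⟨hab, fun c hac hcb => hcons ⟨c, hac, hcb⟩⟩
  have hle := hopt _ Subtype.finite (CLO.efEquiv_sub_compl_singleton hcov hchar)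
  exact (Finite.card_subtype_lt (p := (· ∈ ({b}ᶜ : Set A.carrier))) (x := b) (by simp)).not_ge hle
end

section
/- Given a T-configuration T = {x_1 < ... < x_m} ∪ {y_1 > ... > y_m} satisfying i + j ≤ m+1 ⇒ x_i ≤ y_j, there exists a colouring F of T with m colours such that for each i, x_i is the least point x with |{F(z) : z ≤ x}| = i and y_i is the greatest point y with |{F(z) : z ≥ y}| = i. -/
/-- `a` is the least point of `A` such that exactly `i` colours occur weakly to its left. -/
def CLO.IsXPoint {C : Type} (A : CLO C) (i : ℕ) (a : A.carrier) : Prop :=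
  IsLeast {z : A.carrier | (A.colour '' Set.Iic z).ncard = i} a

/-- `a` is the greatest point of `A` such that exactly `j` colours occur weakly to its right. -/
def CLO.IsYPoint {C : Type} (A : CLO C) (j : ℕ) (a : A.carrier) : Prop :=
  IsGreatest {z : A.carrier | (A.colour '' Set.Ici z).ncard = j} a

/-- A `T`-configuration: a linear order `T = {x_1,...,x_m} ∪ {y_1,...,y_m}` with
`x` strictly increasing, `y` strictly decreasing, `x_1` least and `y_1` greatest
(indices are 0-based: `x i` is the paper's `x_{i+1}`). -/
structure TConfig (m : ℕ) where
  carrier : Type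
  [ord : LinearOrder carrier]
  x : Fin m → carrier
  y : Fin m → carrier
  x_mono : StrictMono x
  y_anti : StrictAnti y
  x_least : ∀ (h : 0 < m) (t : carrier), x ⟨0, h⟩ ≤ t
  y_greatest : ∀ (h : 0 < m) (t : carrier), t ≤ y ⟨0, h⟩
  cover : ∀ t : carrier, (∃ i, t = x i) ∨ (∃ j, t = y j)

attribute [instance] TConfig.ord

/-- `T` is the associated `T`-configuration of the coloured linear order `A`:
the order pattern of the `x`/`y` points of `A` matches that of `T`. -/
def TConfig.Associated {m : ℕ} (T : TConfig m) {C : Type} (A : CLO C) : Prop :=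
  ∃ xA yA : Fin m → A.carrier,
    (∀ i : Fin m, A.IsXPoint ((i : ℕ) + 1) (xA i) ∧ A.IsYPoint ((i : ℕ) + 1) (yA i)) ∧
    (∀ i j : Fin m, (T.x i ≤ T.y j ↔ xA i ≤ yA j) ∧ (T.y j ≤ T.x i ↔ yA j ≤ xA i))

/-!
Colour `x_i` with `i` and `y_j` with `σ j`, for a permutation `σ` with `x_{σ j} ≤ y_j` that
agrees with every coincidence `x_i = y_j`. Then the colours weakly left of `t` are exactly the
`c` with `x_c ≤ t`, and those weakly right of `t` are the `σ j` with `t ≤ y_j`, so the colour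
counts are the ranks of `t` among the `x`'s and among the `y`'s. Such a `σ` exists greedily:
pair the least `y` with the `x` it coincides with, or else with the least `x`; deleting both
points preserves the hypothesis `i + j ≤ m + 1 → x_i ≤ y_j`.
-/

theorem Fin.val_succAbove_le_succ {n : ℕ} (p : Fin (n + 1)) (i : Fin n) :
    (p.succAbove i : ℕ) ≤ i + 1 := by
  unfold Fin.succAbove; split <;> simp

theorem exists_perm_le_fixing_eq {α : Type*} [LinearOrder α] :
    ∀ {m : ℕ} {x y : Fin m → α}, StrictMono x → StrictAnti y →
      (∀ i j : Fin m, (i : ℕ) + j < m → x i ≤ y j) →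
      ∃ σ : Equiv.Perm (Fin m), (∀ j, x (σ j) ≤ y j) ∧ ∀ i j, x i = y j → σ j = i
  | 0, _, _, _, _, _ => ⟨1, finZeroElim, fun _ => finZeroElim⟩
  | m + 1, x, y, hx, hy, h => by
    obtain ⟨i₀, hi₀, hi₀_eq⟩ :
        ∃ i₀, x i₀ ≤ y (Fin.last m) ∧ ∀ i, x i = y (Fin.last m) → i = i₀ := by
      by_cases hm : ∃ i, x i = y (Fin.last m)
      · obtain ⟨i₀, hi₀⟩ := hm
        exact ⟨i₀, hi₀.le, fun i hi => hx.injective (hi.trans hi₀.symm)⟩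
      · exact ⟨0, h 0 _ (by simp), fun i hi => (hm ⟨i, hi⟩).elim⟩
    obtain ⟨σ, hσ, hσ_eq⟩ := exists_perm_le_fixing_eq (x := x ∘ i₀.succAbove)
      (y := y ∘ Fin.castSucc) (hx.comp i₀.strictMono_succAbove)
      (hy.comp_strictMono Fin.strictMono_castSucc) fun k l hkl => h _ _ (by
        have := i₀.val_succAbove_le_succ k
        simp only [Fin.val_castSucc]; omega)
    refine ⟨(finSuccEquiv' (Fin.last m)).trans
      ((Equiv.optionCongr σ).trans (finSuccEquiv' i₀).symm), fun j => ?_, fun i j hij => ?_⟩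
    · induction j using Fin.lastCases with
      | last => simpa using hi₀
      | cast l => simpa [finSuccEquiv'_last_apply_castSucc] using hσ l
    · induction j using Fin.lastCases with
      | last => simpa using (hi₀_eq i hij).symm
      | cast l =>
        obtain ⟨k, rfl⟩ := Fin.exists_succAbove_eq (x := i) (y := i₀) (by
          rintro rfl
          exact (hi₀.trans_lt (hy (Fin.castSucc_lt_last l))).ne hij)
        simpa [finSuccEquiv'_last_apply_castSucc] using hσ_eq k l hij

theorem StrictMono.isLeast_ncard_setOf_le {β : Type*} [LinearOrder β] {m : ℕ} {x : Fin m → β}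
    (hx : StrictMono x) (i : Fin m) :
    IsLeast {t | {c | x c ≤ t}.ncard = (i : ℕ) + 1} (x i) := by
  refine ⟨?_, fun t ht => not_lt.1 fun hti => ?_⟩
  · show {c | x c ≤ x i}.ncard = _
    rw [show {c | x c ≤ x i} = Set.Iic i from Set.ext fun _ => hx.le_iff_le, ← Finset.coe_Iic,
      Set.ncard_coe_finset, Fin.card_Iic]
  · have hsub : {c | x c ≤ t} ⊆ Set.Iio i := fun c hc => hx.lt_iff_lt.1 (hc.trans_lt hti)
    have := Set.ncard_le_ncard hsub
    rw [ht, ← Finset.coe_Iio, Set.ncard_coe_finset, Fin.card_Iio] at this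
    omega

theorem StrictAnti.isGreatest_ncard_setOf_ge {β : Type*} [LinearOrder β] {m : ℕ} {y : Fin m → β}
    (hy : StrictAnti y) (i : Fin m) :
    IsGreatest {t | {c | t ≤ y c}.ncard = (i : ℕ) + 1} (y i) :=
  hy.dual_right.isLeast_ncard_setOf_le i

namespace TConfig

variable {m : ℕ} (T : TConfig m) (σ : Equiv.Perm (Fin m))

noncomputable def permColouring (t : T.carrier) : Fin m :=
  if h : ∃ i, t = T.x i then h.choose else σ ((T.cover t).resolve_left h).choose

theorem permColouring_x (i : Fin m) : T.permColouring σ (T.x i) = i := by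
  have h : ∃ i', T.x i = T.x i' := ⟨i, rfl⟩
  rw [permColouring, dif_pos h]
  exact (T.x_mono.injective h.choose_spec).symm

variable {T σ}

theorem permColouring_y (hσ_eq : ∀ i j, T.x i = T.y j → σ j = i) (j : Fin m) :
    T.permColouring σ (T.y j) = σ j := by
  by_cases h : ∃ i, T.y j = T.x i
  · obtain ⟨i, hi⟩ := h
    rw [hi, permColouring_x, hσ_eq i j hi.symm]
  · rw [permColouring, dif_neg h]
    exact congrArg σ (T.y_anti.injective ((T.cover (T.y j)).resolve_left h).choose_spec).symm

variable (hσ : ∀ j, T.x (σ j) ≤ T.y j) (hσ_eq : ∀ i j, T.x i = T.y j → σ j = i)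
include hσ hσ_eq

theorem permColouring_image_Iic (t : T.carrier) :
    T.permColouring σ '' Set.Iic t = {c | T.x c ≤ t} := by
  ext c
  refine ⟨?_, fun hc => ⟨T.x c, hc, T.permColouring_x σ c⟩⟩
  rintro ⟨z, hz, rfl⟩
  rcases T.cover z with ⟨i, rfl⟩ | ⟨j, rfl⟩
  · rwa [permColouring_x]
  · rw [permColouring_y hσ_eq]
    exact (hσ j).trans hz

theorem permColouring_image_Ici (t : T.carrier) :
    T.permColouring σ '' Set.Ici t = σ '' {j | t ≤ T.y j} := by
  ext c
  refine ⟨?_, ?_⟩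
  · rintro ⟨z, hz, rfl⟩
    rcases T.cover z with ⟨i, rfl⟩ | ⟨j, rfl⟩
    · refine ⟨σ.symm i, ?_, ?_⟩
      · exact le_trans hz (by simpa only [Equiv.apply_symm_apply] using hσ (σ.symm i))
      · rw [permColouring_x, Equiv.apply_symm_apply]
    · exact ⟨j, hz, (permColouring_y hσ_eq j).symm⟩
  · rintro ⟨j, hj, rfl⟩
    exact ⟨T.y j, hj, permColouring_y hσ_eq j⟩

end TConfig

/-- a `T`-configuration satisfying `i + j ≤ m + 1 → x_i ≤ y_j` admits a
surjective colouring with `m` colours for which `x_i` is the least point with `i` colours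
weakly to its left and `y_i` the greatest point with `i` colours weakly to its right. -/
theorem stmt6 (m : ℕ) (T : TConfig m)
    (h : ∀ i j : Fin m, ((i : ℕ) + 1) + ((j : ℕ) + 1) ≤ m + 1 → T.x i ≤ T.y j) :
    ∃ F : T.carrier → Fin m, Function.Surjective F ∧
      ∀ i : Fin m,
        ({ carrier := T.carrier, colour := F } : CLO (Fin m)).IsXPoint ((i : ℕ) + 1) (T.x i) ∧
        ({ carrier := T.carrier, colour := F } : CLO (Fin m)).IsYPoint ((i : ℕ) + 1) (T.y i) := by
  obtain ⟨σ, hσ, hσ_eq⟩ :=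
    exists_perm_le_fixing_eq T.x_mono T.y_anti fun i j hij => h i j (by omega)
  refine ⟨T.permColouring σ, fun c => ⟨T.x c, T.permColouring_x σ c⟩, fun i => ⟨?_, ?_⟩⟩
  · show IsLeast {z | (T.permColouring σ '' Set.Iic z).ncard = (i : ℕ) + 1} (T.x i)
    simpa only [TConfig.permColouring_image_Iic hσ hσ_eq] using T.x_mono.isLeast_ncard_setOf_le i
  · show IsGreatest {z | (T.permColouring σ '' Set.Ici z).ncard = (i : ℕ) + 1} (T.y i)
    simpa only [TConfig.permColouring_image_Ici hσ hσ_eq,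
      Set.ncard_image_of_injective _ σ.injective] using T.y_anti.isGreatest_ncard_setOf_ge i
end

section
/- A ≡_2-class of finite coloured linear orders is finite if and only if it is a singleton, which holds if and only if in its classification by a coloured T-configuration and gap-colour function g, g(u,v) = ∅ for every pair of consecutive points u < v of the T-configuration. -/
/-!
By back-and-forth, `A ≡₂ B` holds iff `A` and `B` realise the same set of characters
`(colour a, colours left of a, colours right of a)`. A point belongs to the `T`-configuration
exactly when its colour is new when read from the left or from the right, so all gaps `g(u,v)` are
empty iff every point is such a `T`-point.

If a point `p` is not a `T`-point, its colour `c` occurs on both of its sides, and replacing `p` by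
any number of copies of `c` realises the same characters: the class is infinite. If every point is
a `T`-point, the characters determine the order: `a < b` iff the colours up to `a` occur strictly
left of `b` and the colours from `b` on occur strictly right of `a`. So a string with the same
characters is isomorphic to the given one, colours included, and hence equal to it.
-/

open Set

lemma range_eq_range_iff {α β γ : Type*} (f : α → γ) (g : β → γ) :
    range f = range g ↔ (∀ a, ∃ b, f a = g b) ∧ ∀ b, ∃ a, f a = g b := by
  simp only [Subset.antisymm_iff, range_subset_iff, mem_range, eq_comm]

lemma forall_Ioo_eq_empty_iff {ι α : Type*} [Finite ι] [LinearOrder α] (f : ι → α) :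
    (∀ s t, (f s < f t ∧ ∀ u, ¬(f s < f u ∧ f u < f t)) → {z | f s < z ∧ z < f t} = ∅) ↔
      ∀ z, (∃ s, f s < z) → (∃ t, z < f t) → z ∈ range f := by
  constructor
  · rintro h z ⟨s, hs⟩ ⟨t, ht⟩
    by_contra hz
    -- the values of `f` closest to `z` on either side are consecutive
    obtain ⟨s', hs', hs'max⟩ := exists_max_image {s | f s < z} f (toFinite _) ⟨s, hs⟩
    obtain ⟨t', ht', ht'min⟩ := exists_min_image {t | z < f t} f (toFinite _) ⟨t, ht⟩
    refine (h s' t' ⟨hs'.trans ht', fun u ⟨hu1, hu2⟩ => ?_⟩).subset ⟨hs', ht'⟩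
    rcases lt_trichotomy (f u) z with hlt | heq | hgt
    · exact not_le_of_gt hu1 (hs'max u hlt)
    · exact hz ⟨u, heq⟩
    · exact not_le_of_gt hu2 (ht'min u hgt)
  · rintro h s t ⟨-, hcons⟩
    refine eq_empty_of_forall_notMem fun z ⟨hz1, hz2⟩ => ?_
    obtain ⟨u, rfl⟩ := h z ⟨s, hz1⟩ ⟨t, hz2⟩
    exact hcons u ⟨hz1, hz2⟩

namespace CLO

variable {C : Type}

lemma range_colour_left (A : CLO C) (a : A.carrier) :
    range (A.left a).colour = A.colour '' Iio a :=
  (image_eq_range _ _).symm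

lemma range_colour_right (A : CLO C) (a : A.carrier) :
    range (A.right a).colour = A.colour '' Ioi a :=
  (image_eq_range _ _).symm

lemma efequiv_one_iff {A B : CLO C} : EFEquiv 1 A B ↔ range A.colour = range B.colour := by
  simp only [EFEquiv, and_true, range_eq_range_iff]

def char (A : CLO C) (a : A.carrier) : C × Set C × Set C :=
  (A.colour a, A.colour '' Iio a, A.colour '' Ioi a)

lemma efequiv_two_iff {A B : CLO C} : EFEquiv 2 A B ↔ range (char A) = range (char B) := by
  rw [EFEquiv]
  simp only [efequiv_one_iff, range_colour_left, range_colour_right, range_eq_range_iff,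
    char, Prod.mk.injEq]

/-- Exactly the points of the `T`-configuration of a finite coloured linear order. -/
def IsTPoint (A : CLO C) (a : A.carrier) : Prop :=
  A.colour a ∉ A.colour '' Iio a ∨ A.colour a ∉ A.colour '' Ioi a

def dual (A : CLO C) : CLO C where
  carrier := A.carrierᵒᵈ
  colour := A.colour

instance (A : CLO C) [Finite A.carrier] : Finite A.dual.carrier :=
  inferInstanceAs (Finite A.carrierᵒᵈ)

instance finite_ofList (l : List C) : Finite (ofList l).carrier :=
  inferInstanceAs (Finite (Fin l.length))

lemma isTPoint_dual_iff {A : CLO C} {a : A.carrier} :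
    A.dual.IsTPoint (OrderDual.toDual a) ↔ A.IsTPoint a :=
  Or.comm

lemma image_Iic_eq_insert {A : CLO C} (a : A.carrier) :
    A.colour '' Iic a = insert (A.colour a) (A.colour '' Iio a) := by
  rw [← Iio_insert, image_insert_eq]

lemma image_Ici_eq_insert {A : CLO C} (a : A.carrier) :
    A.colour '' Ici a = insert (A.colour a) (A.colour '' Ioi a) :=
  image_Iic_eq_insert (A := A.dual) a

section TConfiguration

variable {A : CLO C} [Finite A.carrier]

lemma isXPoint_iff {i : ℕ} {a : A.carrier} :
    A.IsXPoint i a ↔ A.colour a ∉ A.colour '' Iio a ∧ (A.colour '' Iic a).ncard = i := by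
  constructor
  · rintro ⟨hcount, hleast⟩
    refine ⟨fun hold => ?_, hcount⟩
    -- the last point before `a` already sees every colour of `Iic a`
    obtain ⟨p, hp, hpmax⟩ := exists_max_image (Iio a) id (toFinite _)
      (by obtain ⟨w, hw, -⟩ := hold; exact ⟨w, hw⟩)
    have hIic : Iic p = Iio a :=
      Subset.antisymm (fun w hw => lt_of_le_of_lt hw hp) (fun w hw => hpmax w hw)
    have := hleast (show (A.colour '' Iic p).ncard = i by
      rw [hIic, ← hcount, image_Iic_eq_insert, insert_eq_of_mem hold])
    exact (lt_irrefl a) (lt_of_le_of_lt this hp)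
  · rintro ⟨hnew, hcount⟩
    refine ⟨hcount, fun w hw => le_of_not_gt fun hwa => ?_⟩
    have hsub : A.colour '' Iic w ⊆ A.colour '' Iio a :=
      image_mono fun v hv => lt_of_le_of_lt hv hwa
    have hssub : A.colour '' Iio a ⊂ A.colour '' Iic a := by
      rw [image_Iic_eq_insert]; exact ssubset_insert hnew
    have := (ncard_le_ncard hsub).trans_lt (ncard_lt_ncard hssub)
    rw [hw, hcount] at this
    exact lt_irrefl i this

lemma isYPoint_iff {j : ℕ} {a : A.carrier} :
    A.IsYPoint j a ↔ A.colour a ∉ A.colour '' Ioi a ∧ (A.colour '' Ici a).ncard = j :=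
  isXPoint_iff (A := A.dual)

variable [Fintype C]

lemma range_eq_of_isXPoint {x : Fin (Fintype.card C) → A.carrier}
    (hx : ∀ i : Fin (Fintype.card C), A.IsXPoint ((i : ℕ) + 1) (x i)) :
    range x = {a | A.colour a ∉ A.colour '' Iio a} := by
  refine Subset.antisymm (range_subset_iff.2 fun i => (isXPoint_iff.1 (hx i)).1) fun a ha => ?_
  set n := (A.colour '' Iic a).ncard
  have hpos : 0 < n := (ncard_pos (toFinite _)).2 ⟨_, mem_image_of_mem _ (le_refl a)⟩
  have hle : n ≤ Fintype.card C := (ncard_le_card _).trans Nat.card_eq_fintype_card.le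
  have hi := hx ⟨n - 1, by omega⟩
  rw [show n - 1 + 1 = n by omega] at hi
  exact ⟨_, hi.unique (isXPoint_iff.2 ⟨ha, rfl⟩)⟩

lemma range_eq_of_isYPoint {y : Fin (Fintype.card C) → A.carrier}
    (hy : ∀ j : Fin (Fintype.card C), A.IsYPoint ((j : ℕ) + 1) (y j)) :
    range y = {a | A.colour a ∉ A.colour '' Ioi a} :=
  range_eq_of_isXPoint (A := A.dual) hy

lemma range_sumElim_eq_setOf_isTPoint {x y : Fin (Fintype.card C) → A.carrier}
    (hx : ∀ i : Fin (Fintype.card C), A.IsXPoint ((i : ℕ) + 1) (x i))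
    (hy : ∀ j : Fin (Fintype.card C), A.IsYPoint ((j : ℕ) + 1) (y j)) :
    range (Sum.elim x y) = {a | A.IsTPoint a} := by
  rw [Sum.elim_range, range_eq_of_isXPoint hx, range_eq_of_isYPoint hy]
  rfl

omit [Fintype C] in
lemma exists_isTPoint_lt {a : A.carrier} (h : A.colour a ∈ A.colour '' Iio a) :
    ∃ b, A.IsTPoint b ∧ b < a := by
  obtain ⟨w, hw, -⟩ := h
  have : Nonempty A.carrier := ⟨a⟩
  obtain ⟨b, hb⟩ := Finite.exists_min (id : A.carrier → A.carrier)
  refine ⟨b, Or.inl ?_, lt_of_le_of_lt (hb w) hw⟩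
  rintro ⟨v, hv, -⟩
  exact not_le_of_gt hv (hb v)

omit [Fintype C] in
lemma exists_isTPoint_gt {a : A.carrier} (h : A.colour a ∈ A.colour '' Ioi a) :
    ∃ b, A.IsTPoint b ∧ a < b := by
  obtain ⟨b, hb, hlt⟩ := exists_isTPoint_lt (A := A.dual) (a := OrderDual.toDual a) h
  exact ⟨OrderDual.ofDual b, isTPoint_dual_iff.1 hb, hlt⟩

lemma forall_gap_eq_empty_iff_forall_isTPoint {x y : Fin (Fintype.card C) → A.carrier}
    (hx : ∀ i : Fin (Fintype.card C), A.IsXPoint ((i : ℕ) + 1) (x i))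
    (hy : ∀ j : Fin (Fintype.card C), A.IsYPoint ((j : ℕ) + 1) (y j)) :
    (∀ s t : Fin (Fintype.card C) ⊕ Fin (Fintype.card C),
        (Sum.elim x y s < Sum.elim x y t ∧
          ∀ u, ¬(Sum.elim x y s < Sum.elim x y u ∧ Sum.elim x y u < Sum.elim x y t)) →
        {z | Sum.elim x y s < z ∧ z < Sum.elim x y t} = ∅) ↔ ∀ a, A.IsTPoint a := by
  have hrange := range_sumElim_eq_setOf_isTPoint hx hy
  rw [forall_Ioo_eq_empty_iff, hrange]
  refine ⟨fun h a => by_contra fun ha => ?_, fun h a _ _ => h a⟩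
  obtain ⟨hleft, hright⟩ := not_or.1 ha
  obtain ⟨b, hb, hba⟩ := exists_isTPoint_lt (not_not.1 hleft)
  obtain ⟨c, hc, hac⟩ := exists_isTPoint_gt (not_not.1 hright)
  obtain ⟨s, rfl⟩ : b ∈ range (Sum.elim x y) := hrange ▸ hb
  obtain ⟨t, rfl⟩ : c ∈ range (Sum.elim x y) := hrange ▸ hc
  exact ha (h a ⟨s, hba⟩ ⟨t, hac⟩)

end TConfiguration

section Rigid

def CharLT (p q : C × Set C × Set C) : Prop :=
  insert p.1 p.2.1 ⊆ q.2.1 ∧ insert q.1 q.2.2 ⊆ p.2.2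

variable {A B : CLO C}

lemma lt_iff_charLT {a b : A.carrier} (ha : A.IsTPoint a) :
    a < b ↔ CharLT (char A a) (char A b) := by
  simp only [CharLT, char, ← image_Iic_eq_insert, ← image_Ici_eq_insert]
  refine ⟨fun hab => ⟨image_mono (Iic_subset_Iio.2 hab), image_mono (Ici_subset_Ioi.2 hab)⟩,
    fun ⟨hl, hr⟩ => lt_of_not_ge fun hba => ha.elim (fun hleft => hleft ?_) fun hright => hright ?_⟩
  · exact image_mono (Iio_subset_Iio hba) (hl (mem_image_of_mem _ (le_refl a)))
  · exact hr (image_mono (Ici_subset_Ici.2 hba) (mem_image_of_mem _ (le_refl a)))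

lemma char_injective (hA : ∀ a, A.IsTPoint a) : Function.Injective (char A) := by
  have hnlt : ∀ a b, char A a = char A b → ¬ a < b := fun a b h hab => by
    have := (lt_iff_charLT (hA a)).1 hab
    rw [← h, ← lt_iff_charLT (hA a)] at this
    exact lt_irrefl a this
  exact fun a b h => le_antisymm (not_lt.1 (hnlt b a h.symm)) (not_lt.1 (hnlt a b h))

lemma isTPoint_iff_of_char_eq {a : A.carrier} {b : B.carrier} (h : char A a = char B b) :
    A.IsTPoint a ↔ B.IsTPoint b := by
  simp only [char, Prod.mk.injEq] at h
  rw [IsTPoint, IsTPoint, h.1, h.2.1, h.2.2]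

theorem exists_orderIso_of_range_char_eq (hA : ∀ a, A.IsTPoint a)
    (h : range (char A) = range (char B)) :
    ∃ e : A.carrier ≃o B.carrier, ∀ a, B.colour (e a) = A.colour a := by
  have hB : ∀ b, B.IsTPoint b := fun b => by
    obtain ⟨a, ha⟩ : char B b ∈ range (char A) := h ▸ mem_range_self b
    exact (isTPoint_iff_of_char_eq ha).1 (hA a)
  choose f hf using fun a => (h ▸ mem_range_self a : char A a ∈ range (char B))
  have hmono : StrictMono f := fun a a' haa' => by
    rw [lt_iff_charLT (hB _), hf, hf]
    exact (lt_iff_charLT (hA a)).1 haa'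
  have hsurj : Function.Surjective f := fun b => by
    obtain ⟨a, ha⟩ : char B b ∈ range (char A) := h ▸ mem_range_self b
    exact ⟨a, char_injective hB ((hf a).trans ha)⟩
  exact ⟨hmono.orderIsoOfSurjective f hsurj, fun a => congrArg Prod.fst (hf a)⟩

lemma eq_of_orderIso_ofList {l l' : List C} (e : Fin l.length ≃o Fin l'.length)
    (he : ∀ i, l'.get (e i) = l.get i) : l' = l := by
  have hlen : l'.length = l.length := by simpa using (Fintype.card_congr e.toEquiv).symm
  refine List.ext_get hlen fun n h' h => ?_
  rw [← he ⟨n, h⟩]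
  exact congrArg l'.get (Fin.ext (Fin.coe_orderIso_apply e ⟨n, h⟩).symm)

theorem setOf_efequiv_two_eq_singleton {l : List C} (hl : ∀ a, (ofList l).IsTPoint a) :
    {l' | EFEquiv 2 (ofList l) (ofList l')} = {l} := by
  ext l'
  simp only [mem_ofPred_eq, mem_singleton_iff, efequiv_two_iff]
  refine ⟨fun h => ?_, fun h => h ▸ rfl⟩
  obtain ⟨e, he⟩ := exists_orderIso_of_range_char_eq hl h
  exact eq_of_orderIso_ofList e he

end Rigid

section Pumping

variable {A B : CLO C}

lemma image_Iio_eq_of_monotone_surjective (φ : B.carrier → A.carrier) (hmono : Monotone φ)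
    (hsurj : Function.Surjective φ) (hcol : ∀ b, A.colour (φ b) = B.colour b)
    (hfib : ∀ b b', b' < b → φ b' = φ b → A.colour (φ b) ∈ A.colour '' Iio (φ b))
    (b : B.carrier) :
    B.colour '' Iio b = A.colour '' Iio (φ b) := by
  refine Subset.antisymm ?_ ?_
  · rintro _ ⟨b', hb', rfl⟩
    rcases (hmono hb'.le).lt_or_eq with hlt | heq
    · exact ⟨φ b', hlt, hcol b'⟩
    · rw [← hcol b', heq]
      exact hfib b b' hb' heq
  · rintro _ ⟨a', ha', rfl⟩
    obtain ⟨b', rfl⟩ := hsurj a'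
    exact ⟨b', lt_of_not_ge fun h => not_le_of_gt ha' (hmono h), (hcol b').symm⟩

theorem range_char_eq_of_monotone_surjective (φ : B.carrier → A.carrier) (hmono : Monotone φ)
    (hsurj : Function.Surjective φ) (hcol : ∀ b, A.colour (φ b) = B.colour b)
    (hleft : ∀ b b', b' < b → φ b' = φ b → A.colour (φ b) ∈ A.colour '' Iio (φ b))
    (hright : ∀ b b', b < b' → φ b' = φ b → A.colour (φ b) ∈ A.colour '' Ioi (φ b)) :
    range (char B) = range (char A) := by
  have hchar : char B = char A ∘ φ := funext fun b =>
    Prod.ext (hcol b).symm <| Prod.ext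
      (image_Iio_eq_of_monotone_surjective φ hmono hsurj hcol hleft b)
      (image_Iio_eq_of_monotone_surjective (A := A.dual) (B := B.dual) φ hmono.dual hsurj hcol
        hright b)
  rw [hchar, hsurj.range_comp]

theorem efequiv_two_insert_copies {l : List C} {p : Fin l.length}
    (hp : ¬ (ofList l).IsTPoint p) (k : ℕ) :
    EFEquiv 2 (ofList l) (ofList (l.take p ++ List.replicate k (l.get p) ++ l.drop p)) := by
  set l' := l.take p ++ List.replicate k (l.get p) ++ l.drop p
  obtain ⟨hleft, hright⟩ := not_or.1 hp
  have hlen : l'.length = l.length + k := by simp [l']; omega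
  have hp' := p.isLt
  -- the `k + 1` copies of `l[p]` at positions `p, …, p + k` of `l'` are sent to `p`
  let φ : (ofList l').carrier → (ofList l).carrier := fun n : Fin l'.length =>
    (⟨n.val - min (n.val - p.val) k, by omega⟩ : Fin l.length)
  have hφ : ∀ b b' : Fin l'.length, b ≠ b' → φ b' = φ b → φ b = p := fun b b' hne heq => by
    have := congrArg Fin.val heq
    have := Fin.val_ne_of_ne hne
    exact Fin.ext (by simp only [φ] at *; omega)
  rw [efequiv_two_iff]
  refine (range_char_eq_of_monotone_surjective (B := ofList l') φ ?_ ?_ ?_ ?_ ?_).symm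
  · exact fun n n' h => Fin.mk_le_mk.2 (by have := Fin.le_def.1 h; omega)
  · intro (m : Fin l.length)
    have := m.isLt
    rcases le_or_gt m.val p.val with h | h
    · exact ⟨⟨m.val, by omega⟩, Fin.ext (by simp only [φ]; omega)⟩
    · exact ⟨⟨m.val + k, by omega⟩, Fin.ext (by simp only [φ]; omega)⟩
  · intro (n : Fin l'.length)
    simp only [ofList, List.get_eq_getElem, l', φ, List.getElem_append, List.getElem_take,
      List.getElem_replicate, List.getElem_drop, List.length_append, List.length_take,
      List.length_replicate]
    split_ifs <;> congr 1 <;> omega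
  · exact fun b b' hlt heq => hφ b b' hlt.ne' heq ▸ not_not.1 hleft
  · exact fun b b' hlt heq => hφ b b' hlt.ne heq ▸ not_not.1 hright

theorem setOf_efequiv_two_infinite {l : List C} {p : Fin l.length}
    (hp : ¬ (ofList l).IsTPoint p) : {l' | EFEquiv 2 (ofList l) (ofList l')}.Infinite :=
  infinite_of_injective_forall_mem
    (f := fun k => l.take p ++ List.replicate k (l.get p) ++ l.drop p)
    (fun k k' h => by simpa using congrArg List.length h) (efequiv_two_insert_copies hp)

end Pumping

end CLO

theorem stmt8_general {C : Type} [Fintype C] (m : ℕ) (hC : Fintype.card C = m)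
    (l : List C)
    (x y : Fin m → (CLO.ofList l).carrier)
    (hx : ∀ i : Fin m, (CLO.ofList l).IsXPoint ((i : ℕ) + 1) (x i))
    (hy : ∀ j : Fin m, (CLO.ofList l).IsYPoint ((j : ℕ) + 1) (y j)) :
    ({l' : List C | CLO.EFEquiv 2 (CLO.ofList l) (CLO.ofList l')}.Finite ↔
      {l' : List C | CLO.EFEquiv 2 (CLO.ofList l) (CLO.ofList l')} = {l}) ∧
    ({l' : List C | CLO.EFEquiv 2 (CLO.ofList l) (CLO.ofList l')} = {l} ↔
      ∀ s t : Fin m ⊕ Fin m,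
        (Sum.elim x y s < Sum.elim x y t ∧
          ∀ u : Fin m ⊕ Fin m,
            ¬(Sum.elim x y s < Sum.elim x y u ∧ Sum.elim x y u < Sum.elim x y t)) →
        {z : (CLO.ofList l).carrier | Sum.elim x y s < z ∧ z < Sum.elim x y t} = ∅) := by
  subst hC
  rw [CLO.forall_gap_eq_empty_iff_forall_isTPoint hx hy]
  by_cases hl : ∀ a, (CLO.ofList l).IsTPoint a
  · rw [CLO.setOf_efequiv_two_eq_singleton hl]
    exact ⟨iff_of_true (Set.finite_singleton l) rfl, iff_of_true rfl hl⟩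
  · obtain ⟨p, hp⟩ := not_forall.1 hl
    have hinf := CLO.setOf_efequiv_two_infinite hp
    have hne : {l' | CLO.EFEquiv 2 (CLO.ofList l) (CLO.ofList l')} ≠ {l} :=
      fun h => hinf (h ▸ Set.finite_singleton l)
    exact ⟨iff_of_false hinf hne, iff_of_false hne hl⟩

/-- an `≡₂`-class of finite coloured linear orders (represented as lists over `C`)
is finite iff it is a singleton, iff all the gap-colour sets `g(u,v)` between consecutive
points of the associated `T`-configuration are empty. -/
theorem stmt8 {C : Type} [Fintype C] (m : ℕ) (hC : Fintype.card C = m)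
    (l : List C) (hsurj : Function.Surjective (CLO.ofList l).colour)
    (x y : Fin m → (CLO.ofList l).carrier)
    (hx : ∀ i : Fin m, (CLO.ofList l).IsXPoint ((i : ℕ) + 1) (x i))
    (hy : ∀ j : Fin m, (CLO.ofList l).IsYPoint ((j : ℕ) + 1) (y j)) :
    ({l' : List C | CLO.EFEquiv 2 (CLO.ofList l) (CLO.ofList l')}.Finite ↔
      {l' : List C | CLO.EFEquiv 2 (CLO.ofList l) (CLO.ofList l')} = {l}) ∧
    ({l' : List C | CLO.EFEquiv 2 (CLO.ofList l) (CLO.ofList l')} = {l} ↔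
      ∀ s t : Fin m ⊕ Fin m,
        (Sum.elim x y s < Sum.elim x y t ∧
          ∀ u : Fin m ⊕ Fin m,
            ¬(Sum.elim x y s < Sum.elim x y u ∧ Sum.elim x y u < Sum.elim x y t)) →
        {z : (CLO.ofList l).carrier | Sum.elim x y s < z ∧ z < Sum.elim x y t} = ∅) :=
  stmt8_general m hC l x y hx hy
end

section
/- For any number of colours m, no ≡_2-optimal finite m-coloured linear order realizes the same 1-character (including the colour) at two distinct points. -/
/-!
If `a < b` carry the same 1-character, deleting `b` does not change the set of 1-characters
realized, and for linear orders that set determines the `≡₂`-class. Indeed, a point below `b`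
still sees the colour of `b` to its right (that colour occurs to the right of `a`, hence to the
right of `b`), a point above `b` still sees it at `a`, and `b` itself is replaced by `a`. The
result is a strictly shorter `≡₂`-equivalent order.
-/

open Set

theorem Set.image_sdiff_singleton_eq_image {α β : Type*} (f : α → β) {s : Set α} {b : α}
    (h : b ∈ s → f b ∈ f '' (s \ {b})) : f '' (s \ {b}) = f '' s := by
  by_cases hb : b ∈ s
  · calc f '' (s \ {b}) = insert (f b) (f '' (s \ {b})) := (insert_eq_of_mem (h hb)).symm
      _ = f '' s := by rw [← image_insert_eq, insert_sdiff_self_of_mem hb]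
  · rw [sdiff_singleton_eq_self hb]

namespace CLO

variable {C : Type}

def charOne (A : CLO C) (x : A.carrier) : Set C × C × Set C :=
  (A.colour '' Iio x, A.colour x, A.colour '' Ioi x)

theorem range_colour_sub (A : CLO C) (s : Set A.carrier) :
    range (A.sub s).colour = A.colour '' s := by
  change range (A.colour ∘ Subtype.val) = _
  rw [range_comp, Subtype.range_coe]

theorem charOne_sub (A : CLO C) (s : Set A.carrier) (y : s) :
    (A.sub s).charOne y =
      (A.colour '' (s ∩ Iio y.val), A.colour y, A.colour '' (s ∩ Ioi y.val)) := by
  unfold charOne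
  rw [← Subtype.image_preimage_coe, ← Subtype.image_preimage_coe, preimage_subtype_val_Iio,
    preimage_subtype_val_Ioi, image_image, image_image]
  rfl

theorem efEquiv_one_iff (X Y : CLO C) :
    EFEquiv 1 X Y ↔ range X.colour = range Y.colour := by
  simp only [EFEquiv, and_true, Subset.antisymm_iff, range_subset_iff, mem_range]
  exact and_congr (forall_congr' fun _ => exists_congr fun _ => eq_comm) Iff.rfl

theorem efEquiv_one_left_iff (X Y : CLO C) (x : X.carrier) (y : Y.carrier) :
    EFEquiv 1 (X.left x) (Y.left y) ↔ X.colour '' Iio x = Y.colour '' Iio y := by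
  rw [efEquiv_one_iff, left, left, range_colour_sub, range_colour_sub]
  rfl

theorem efEquiv_one_right_iff (X Y : CLO C) (x : X.carrier) (y : Y.carrier) :
    EFEquiv 1 (X.right x) (Y.right y) ↔ X.colour '' Ioi x = Y.colour '' Ioi y := by
  rw [efEquiv_one_iff, right, right, range_colour_sub, range_colour_sub]
  rfl

theorem charOne_eq_charOne_iff (X Y : CLO C) (x : X.carrier) (y : Y.carrier) :
    X.charOne x = Y.charOne y ↔ X.colour x = Y.colour y ∧
      EFEquiv 1 (X.left x) (Y.left y) ∧ EFEquiv 1 (X.right x) (Y.right y) := by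
  rw [efEquiv_one_left_iff, efEquiv_one_right_iff, charOne, charOne, Prod.mk.injEq,
    Prod.mk.injEq]
  tauto

theorem sameChar_one_iff (A : CLO C) (a b : A.carrier) :
    SameChar 1 A a b ↔ A.charOne a = A.charOne b :=
  (charOne_eq_charOne_iff A A a b).symm

theorem efEquiv_two_iff (X Y : CLO C) :
    EFEquiv 2 X Y ↔ range X.charOne = range Y.charOne := by
  rw [EFEquiv]
  simp only [← charOne_eq_charOne_iff, Subset.antisymm_iff, range_subset_iff, mem_range]
  exact and_congr (forall_congr' fun _ => exists_congr fun _ => eq_comm) Iff.rfl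

theorem efEquiv_two_sub_compl_singleton (A : CLO C) {a b : A.carrier} (hab : a < b)
    (h : A.charOne a = A.charOne b) : EFEquiv 2 A (A.sub {b}ᶜ) := by
  obtain ⟨-, hcol, hright⟩ : _ ∧ _ ∧ _ := by simpa only [charOne, Prod.mk.injEq] using h
  obtain ⟨c, hbc, hc⟩ : A.colour b ∈ A.colour '' Ioi b := hright ▸ mem_image_of_mem _ hab
  have hkeep : ∀ x (hx : x ≠ b), A.charOne x = (A.sub {b}ᶜ).charOne ⟨x, hx⟩ := by
    intro x hx
    rw [charOne_sub, ← sdiff_eq_compl_inter, ← sdiff_eq_compl_inter,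
      image_sdiff_singleton_eq_image, image_sdiff_singleton_eq_image]
    · rfl
    · exact fun hxb => ⟨c, ⟨lt_trans hxb hbc, hbc.ne'⟩, hc⟩
    · exact fun hbx => ⟨a, ⟨lt_trans hab hbx, hab.ne⟩, hcol⟩
  rw [efEquiv_two_iff]
  refine (range_subset_iff.2 fun x => ?_).antisymm (range_subset_iff.2 fun y => ?_)
  · by_cases hx : x = b
    · subst hx
      exact ⟨⟨a, hab.ne⟩, (hkeep a hab.ne).symm.trans h⟩
    · exact ⟨⟨x, hx⟩, (hkeep x hx).symm⟩
  · exact ⟨y.1, hkeep y.1 y.2⟩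

theorem not_optimal_two_of_charOne_eq (A : CLO C) [Finite A.carrier] {a b : A.carrier}
    (hab : a < b) (h : A.charOne a = A.charOne b) : ¬ Optimal 2 A := fun hopt =>
  (Finite.card_subtype_lt (p := (· ∈ ({b}ᶜ : Set A.carrier))) (not_not_intro rfl)).not_ge <|
    hopt _ (inferInstanceAs (Finite ({b}ᶜ : Set A.carrier)))
      (A.efEquiv_two_sub_compl_singleton hab h)

end CLO

/-- no `≡₂`-optimal finite coloured linear order realizes the same `1`-character
(including the colour) at two distinct points. -/
theorem stmt10 {C : Type} (A : CLO C) [Finite A.carrier] (hopt : CLO.Optimal 2 A) :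
    ∀ a b : A.carrier, CLO.SameChar 1 A a b → a = b := by
  intro a b hab
  rw [CLO.sameChar_one_iff] at hab
  by_contra hne
  rcases Ne.lt_or_gt hne with hlt | hgt
  · exact A.not_optimal_two_of_charOne_eq hlt hab hopt
  · exact A.not_optimal_two_of_charOne_eq hgt hab.symm hopt
end
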